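/- Let λ ∈ gl_2(F). The 4-dimensional algebra c(λ) with basis a,b,x,y and products [a,x] = −[x,a] = λ₁₁x + λ₁₂y, [a,y] = −[y,a] = λ₂₁x + λ₂₂y, [x,y] = −[y,x] = b (all other products zero) is a Lie algebra if and only if tr(λ) = 0, i.e., λ ∈ sl_2(F). -/
import Mathlib


/-- The bracket of the skew-symmetric 4-dimensional algebra `c(λ)` on coordinates
`(a, b, x, y)`: `[a,x] = -[x,a] = λ₁₁x + λ₁₂y`, `[a,y] = -[y,a] = λ₂₁x + λ₂₂y`,
`[x,y] = -[y,x] = b`, all other products of basis vectors being zero. -/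
def cBr {F : Type*} [Field F] (lam : Matrix (Fin 2) (Fin 2) F) :
    (F × F × F × F) → (F × F × F × F) → (F × F × F × F) :=
  fun u v =>
    (0,
      u.2.2.1 * v.2.2.2 - u.2.2.2 * v.2.2.1,
      u.1 * (lam 0 0 * v.2.2.1 + lam 1 0 * v.2.2.2)
        - v.1 * (lam 0 0 * u.2.2.1 + lam 1 0 * u.2.2.2),
      u.1 * (lam 0 1 * v.2.2.1 + lam 1 1 * v.2.2.2)
        - v.1 * (lam 0 1 * u.2.2.1 + lam 1 1 * u.2.2.2))

/-- `c(λ)` is a Lie algebra iff `tr(λ) = 0`, i.e. `λ ∈ sl₂(F)`. -/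
theorem cBr_isLie_iff_trace_eq_zero {F : Type*} [Field F] (lam : Matrix (Fin 2) (Fin 2) F) :
    ((∀ u : F × F × F × F, cBr lam u u = 0) ∧
      ∀ u v w : F × F × F × F,
        cBr lam (cBr lam u v) w + cBr lam (cBr lam v w) u + cBr lam (cBr lam w u) v = 0)
      ↔ Matrix.trace lam = 0 := by
  constructor
  · rintro ⟨-, h⟩
    have := h (1,0,0,0) (0,0,1,0) (0,0,0,1)
    simp [cBr, Prod.ext_iff, Matrix.trace, Matrix.diag, Fin.sum_univ_two] at this ⊢
    linear_combination this
  · intro h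
    have h' : lam 1 1 = -(lam 0 0) := by
      simp [Matrix.trace, Matrix.diag, Fin.sum_univ_two] at h
      linear_combination h
    refine ⟨fun u => by simp [cBr, Prod.ext_iff]; ring, fun u v w => ?_⟩
    simp [cBr, Prod.ext_iff, h']
    refine ⟨by ring, by ring, by ring⟩
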